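/- arXiv:1511.08627 — 2 statements merged into one kernel-verified Lean document; each statement's English description precedes it below -/
import Mathlib

section
/- Let r₁,…,rₙ and e₁,…,eₙ be positive reals with decreasing order statistics r_{(1)} ≥ … ≥ r_{(n)} and e_{(1)} ≥ … ≥ e_{(n)}. Let δ : (0,∞) → ℝ and suppose x ↦ x² − δ(x) is strictly increasing on an interval containing {r_{(l)}, …, r_{(1)}}, and eⱼ² ≥ rⱼ² − δ(rⱼ) for all j with rⱼ ≥ r_{(l)}. Then e_{(l)}² ≥ r_{(l)}² − δ(r_{(l)}). -/
/-! An order statistic is characterised by counting: `a ≤ f_{(i+1)}` iff more than `i` of the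
values `f j` are `≥ a`. At least `l` indices satisfy `r_{(l)} ≤ r j`; for each of them
monotonicity of `x² − δ(x)` and the hypothesis give `c ≤ e_j²` with `c = r_{(l)}² − δ(r_{(l)})`,
so (when `c > 0`) at least `l` of the `e j` are `≥ √c`, whence `√c ≤ e_{(l)}`. -/

open Finset

/-- The `i`-th (0-based) largest value among `r 0, …, r (n-1)` (decreasing order statistic). -/
noncomputable def orderStatDesc {n : ℕ} (r : Fin n → ℝ) (i : ℕ) : ℝ :=
  ((List.ofFn r).mergeSort (fun a b => b ≤ a)).getD i 0

theorem List.countP_ofFn_eq_card_filter {α : Type*} {n : ℕ} (f : Fin n → α) (p : α → Prop)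
    [DecidablePred p] : (List.ofFn f).countP (p ·) = #{j | p (f j)} := by
  rw [← Multiset.coe_countP, ← Fin.univ_val_map, Multiset.countP_map, card_def, filter_val]

theorem List.SortedGE.le_getElem_iff_lt_countP {α : Type*} [LinearOrder α] {l : List α}
    (hl : l.SortedGE) {i : ℕ} (hi : i < l.length) (a : α) :
    a ≤ l[i] ↔ i < l.countP (a ≤ ·) := by
  constructor
  · intro ha
    have htake : (l.take (i + 1)).countP (a ≤ ·) = i + 1 := by
      rw [List.countP_eq_length.2, List.length_take_of_le hi]
      intro b hb
      obtain ⟨j, hj, rfl⟩ := List.getElem_of_mem hb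
      simp only [List.getElem_take, decide_eq_true_eq]
      exact ha.trans (hl.getElem_ge_getElem_of_le (by simp at hj; omega))
    exact htake.symm.trans_le (List.take_sublist (i + 1) l).countP_le
  · intro hcount
    by_contra! ha
    have hdrop : (l.drop i).countP (a ≤ ·) = 0 := by
      rw [List.countP_eq_zero]
      intro b hb
      obtain ⟨j, hj, rfl⟩ := List.getElem_of_mem hb
      simp only [List.getElem_drop, decide_eq_true_eq, not_le]
      exact (hl.getElem_ge_getElem_of_le (by omega)).trans_lt ha
    have htake := (l.take i).countP_le_length (p := (a ≤ ·))
    rw [← List.take_append_drop i l, List.countP_append, hdrop] at hcount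
    rw [List.length_take] at htake
    omega

theorem le_orderStatDesc_iff {n : ℕ} (f : Fin n → ℝ) {i : ℕ} (hi : i < n) (a : ℝ) :
    a ≤ orderStatDesc f i ↔ i < #{j | a ≤ f j} := by
  have hlen : i < ((List.ofFn f).mergeSort (· ≥ ·)).length := by simpa using hi
  rw [orderStatDesc, List.getD_eq_getElem _ _ hlen,
    List.sortedGE_mergeSort.le_getElem_iff_lt_countP hlen,
    (List.mergeSort_perm _ _).countP_eq, List.countP_ofFn_eq_card_filter f (a ≤ ·)]

theorem lt_card_orderStatDesc_le {n : ℕ} (f : Fin n → ℝ) {i : ℕ} (hi : i < n) :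
    i < #{j | orderStatDesc f i ≤ f j} :=
  (le_orderStatDesc_iff f hi _).1 le_rfl

theorem le_orderStatDesc_of_forall {n : ℕ} (r e : Fin n → ℝ) {i : ℕ} (hi : i < n) {a : ℝ}
    (h : ∀ j, orderStatDesc r i ≤ r j → a ≤ e j) : a ≤ orderStatDesc e i :=
  (le_orderStatDesc_iff e hi a).2 <| (lt_card_orderStatDesc_le r hi).trans_le <|
    card_le_card fun j => by simpa using h j

theorem orderStat_sq_ge_of_sq_ge_general {n : ℕ} (r e : Fin n → ℝ)
    (hepos : ∀ j, 0 < e j)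
    (δ : ℝ → ℝ) (l : ℕ) (hl1 : 1 ≤ l) (hln : l ≤ n)
    (I : Set ℝ)
    (hmemI : orderStatDesc r (l - 1) ∈ I ∧
      ∀ j, orderStatDesc r (l - 1) ≤ r j → r j ∈ I)
    (hmono : StrictMonoOn (fun x => x ^ 2 - δ x) I)
    (hge : ∀ j, orderStatDesc r (l - 1) ≤ r j → (r j) ^ 2 - δ (r j) ≤ (e j) ^ 2) :
    (orderStatDesc r (l - 1)) ^ 2 - δ (orderStatDesc r (l - 1)) ≤
      (orderStatDesc e (l - 1)) ^ 2 := by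
  set t := orderStatDesc r (l - 1)
  set c := t ^ 2 - δ t
  have hc : ∀ j, t ≤ r j → c ≤ e j ^ 2 := fun j hj =>
    (hmono.monotoneOn hmemI.1 (hmemI.2 j hj) hj).trans (hge j hj)
  rcases le_or_gt c 0 with hc0 | hc0
  · exact hc0.trans (sq_nonneg _)
  have hsqrt : √c ≤ orderStatDesc e (l - 1) :=
    le_orderStatDesc_of_forall r e (by omega) fun j hj =>
      Real.sqrt_le_iff.2 ⟨(hepos j).le, hc j hj⟩
  calc c = √c ^ 2 := (Real.sq_sqrt hc0.le).symm
    _ ≤ orderStatDesc e (l - 1) ^ 2 := pow_le_pow_left₀ (Real.sqrt_nonneg c) hsqrt 2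

/-- If `x ↦ x² − δ(x)` is strictly increasing on an interval containing
`{r_{(l)}, …, r_{(1)}}` and `eⱼ² ≥ rⱼ² − δ(rⱼ)` for all `j` with `rⱼ ≥ r_{(l)}`,
then `e_{(l)}² ≥ r_{(l)}² − δ(r_{(l)})`. -/
theorem orderStat_sq_ge_of_sq_ge {n : ℕ} (r e : Fin n → ℝ)
    (hrpos : ∀ j, 0 < r j) (hepos : ∀ j, 0 < e j)
    (δ : ℝ → ℝ) (l : ℕ) (hl1 : 1 ≤ l) (hln : l ≤ n)
    (I : Set ℝ) (hI : I.OrdConnected)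
    (hmemI : orderStatDesc r (l - 1) ∈ I ∧
      ∀ j, orderStatDesc r (l - 1) ≤ r j → r j ∈ I)
    (hmono : StrictMonoOn (fun x => x ^ 2 - δ x) I)
    (hge : ∀ j, orderStatDesc r (l - 1) ≤ r j → (r j) ^ 2 - δ (r j) ≤ (e j) ^ 2) :
    (orderStatDesc r (l - 1)) ^ 2 - δ (orderStatDesc r (l - 1)) ≤
      (orderStatDesc e (l - 1)) ^ 2 :=
  orderStat_sq_ge_of_sq_ge_general r e hepos δ l hl1 hln I hmemI hmono hge
end

section
/- Lemma (bound on ε): Let X₁,…,Xₙ ∈ ℝ^d, μ, μ̂ ∈ ℝ^d, Σ, Σ̂ invertible positive definite d×d matrices. Define Rᵢ = d_Σ(Xᵢ, μ), Eᵢ = d_{Σ̂}(Xᵢ, μ̂), with decreasing order statistics R_{(i,n)} and E_{(i,n)}, and ε_{(i,n)} = E_{(i,n)}² − R_{(i,n)}². Let M = max{λ_max·A, √λ_max·(2‖μ‖A + B), A‖μ‖² + B‖μ‖ + C} with A = ‖Σ⁻¹ − Σ̂⁻¹‖, B = (‖μ̂‖+‖μ‖)‖Σ⁻¹ − Σ̂⁻¹‖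 + (‖Σ̂⁻¹‖+‖Σ⁻¹‖)‖μ − μ̂‖, C = ‖μ‖²‖Σ⁻¹ − Σ̂⁻¹‖ + (‖μ‖+‖μ̂‖)‖Σ̂⁻¹‖‖μ − μ̂‖, and λ_max the largest eigenvalue of Σ. If M < 1 and R_{(l,n)} > M/(2(1−M)) for some 1 ≤ l ≤ n, then |ε_{(l,n)}| ≤ δ(R_{(l,n)}), where δ(x) = Mx² + Mx + M. -/
/-!
Pointwise, `|E_i² − R_i²| ≤ δ(R_i)`: expanding the difference of the quadratic forms
`⟪x − μ̂, Σ̂⁻¹(x − μ̂)⟫ − ⟪x − μ, Σ⁻¹(x − μ)⟫` so that every term contains `Σ⁻¹ − Σ̂⁻¹` or `μ − μ̂`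
bounds it by `A‖x‖² + B‖x‖ + C`, and `‖x‖ ≤ ‖μ‖ + √λ_max R` since `‖u‖² ≤ λ_max ⟪u, Σ⁻¹u⟫`.
The bound passes to order statistics by counting. `x ↦ x² + δ(x)` increases on `[0, ∞)` and
`x ↦ x² − δ(x)` on `[M/(2(1−M)), ∞)`, so if `E_(l)²` exceeded `R_(l)² + δ(R_(l))`, fewer than `l`
of the `E_i` would be `≥ E_(l)`, and if it were below `R_(l)² − δ(R_(l))`, at least `l` of them
would be `> E_(l)`.
-/

/-- Mahalanobis distance relative to `A`: `d_A(x,y) = ⟨x−y, A⁻¹(x−y)⟩^{1/2}`. -/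
noncomputable def mahalanobis {d : ℕ} (A : Matrix (Fin d) (Fin d) ℝ)
    (x y : EuclideanSpace ℝ (Fin d)) : ℝ :=
  Real.sqrt (inner ℝ (x - y)
    ((WithLp.equiv 2 (Fin d → ℝ)).symm (A⁻¹.mulVec (WithLp.equiv 2 (Fin d → ℝ) (x - y)))) : ℝ)

/-- Operator norm of a real matrix (as an operator on Euclidean space). -/
noncomputable def matOpNorm {d : ℕ} (A : Matrix (Fin d) (Fin d) ℝ) : ℝ :=
  ‖Matrix.toEuclideanCLM (𝕜 := ℝ) A‖

open scoped Finset RealInnerProductSpace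

theorem Fin.card_filter_univ_eq_countP_ofFn {α : Type*} {n : ℕ} (f : Fin n → α)
    (p : α → Prop) [DecidablePred p] :
    #{i | p (f i)} = (List.ofFn f).countP (fun a => decide (p a)) := by
  rw [← Multiset.coe_countP, ← Fin.univ_val_map, Multiset.countP_map, Finset.card_def,
    Finset.filter_val]

section OrderStat

variable {n : ℕ} (r : Fin n → ℝ) {k : ℕ}

theorem exists_perm_orderStatDesc (hk : k < n) :
    ∃ front back : List ℝ, (List.ofFn r).Perm (front ++ orderStatDesc r k :: back) ∧
      front.length = k ∧ (∀ a ∈ front, orderStatDesc r k ≤ a) ∧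
      ∀ b ∈ back, b ≤ orderStatDesc r k := by
  set L := (List.ofFn r).mergeSort (fun a b => b ≤ a)
  have hkL : k < L.length := by rwa [List.length_mergeSort, List.length_ofFn]
  have hρ : orderStatDesc r k = L[k] := List.getD_eq_getElem _ _ hkL
  have hsplit : L = L.take k ++ L[k] :: L.drop (k + 1) := by
    rw [← List.drop_eq_getElem_cons, List.take_append_drop]
  have hsorted : L.Pairwise (fun a b => b ≤ a) := List.pairwise_mergeSort' (· ≥ ·) _
  rw [hsplit, List.pairwise_append, List.pairwise_cons] at hsorted
  refine ⟨L.take k, L.drop (k + 1), ?_, by simp; omega, ?_, ?_⟩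
  · rw [hρ, ← hsplit]; exact (List.mergeSort_perm _ _).symm
  · exact fun a ha => hρ ▸ hsorted.2.2 a ha _ List.mem_cons_self
  · exact fun b hb => hρ ▸ hsorted.2.1.1 b hb

theorem orderStatDesc_mem_range (hk : k < n) : orderStatDesc r k ∈ Set.range r := by
  obtain ⟨front, back, hperm, -⟩ := exists_perm_orderStatDesc r hk
  exact List.mem_ofFn.mp (hperm.mem_iff.mpr (by simp))

theorem lt_card_orderStatDesc_le_s7 (hk : k < n) : k < #{i | orderStatDesc r k ≤ r i} := by
  obtain ⟨front, back, hperm, hlen, hfront, -⟩ := exists_perm_orderStatDesc r hk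
  rw [Fin.card_filter_univ_eq_countP_ofFn, hperm.countP_eq, List.countP_append,
    List.countP_eq_length.mpr (by simpa using hfront), List.countP_cons_of_pos (by simp)]
  omega

theorem card_orderStatDesc_lt_le (hk : k < n) : #{i | orderStatDesc r k < r i} ≤ k := by
  obtain ⟨front, back, hperm, hlen, -, hback⟩ := exists_perm_orderStatDesc r hk
  have hzero : (orderStatDesc r k :: back).countP (fun a => decide (orderStatDesc r k < a)) = 0 :=
    List.countP_eq_zero.mpr (by simpa using hback)
  rw [Fin.card_filter_univ_eq_countP_ofFn, hperm.countP_eq, List.countP_append, hzero]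
  exact hlen ▸ List.countP_le_length

variable {r} (e : Fin n → ℝ) {c : ℝ}

theorem orderStatDesc_lt_of_forall (hk : k < n) (h : ∀ i, r i ≤ orderStatDesc r k → e i < c) :
    orderStatDesc e k < c := by
  by_contra! hc
  have : #{i | orderStatDesc e k ≤ e i} ≤ #{i | orderStatDesc r k < r i} :=
    Finset.card_le_card fun i => by
      simp only [Finset.mem_filter_univ]
      exact fun hi => lt_of_not_ge fun hr => (h i hr).not_ge (hc.trans hi)
  have := lt_card_orderStatDesc_le_s7 e hk
  have := card_orderStatDesc_lt_le r hk
  omega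

theorem lt_orderStatDesc_of_forall (hk : k < n) (h : ∀ i, orderStatDesc r k ≤ r i → c < e i) :
    c < orderStatDesc e k := by
  by_contra! hc
  have : #{i | orderStatDesc r k ≤ r i} ≤ #{i | orderStatDesc e k < e i} :=
    Finset.card_le_card fun i => by
      simp only [Finset.mem_filter_univ]
      exact fun hi => hc.trans_lt (h i hi)
  have := lt_card_orderStatDesc_le_s7 r hk
  have := card_orderStatDesc_lt_le e hk
  omega

variable {M : ℝ}

theorem sq_orderStatDesc_le (hk : k < n) (hM : 0 ≤ M) (hr : ∀ i, 0 ≤ r i) (he : ∀ i, 0 ≤ e i)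
    (h : ∀ i, e i ^ 2 ≤ r i ^ 2 + (M * r i ^ 2 + M * r i + M)) :
    orderStatDesc e k ^ 2 ≤
      orderStatDesc r k ^ 2 + (M * orderStatDesc r k ^ 2 + M * orderStatDesc r k + M) := by
  set ρ := orderStatDesc r k
  set η := orderStatDesc e k
  obtain ⟨j, hj⟩ := orderStatDesc_mem_range e hk
  have hη : 0 ≤ η := (he j).trans_eq hj
  by_contra! hlt
  refine lt_irrefl η (orderStatDesc_lt_of_forall (r := r) e hk fun i hi => ?_)
  have hsq : r i ^ 2 ≤ ρ ^ 2 := pow_le_pow_left₀ (hr i) hi 2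
  have : e i ^ 2 < η ^ 2 := by
    linarith [h i, mul_le_mul_of_nonneg_left hsq hM, mul_le_mul_of_nonneg_left hi hM]
  exact lt_of_pow_lt_pow_left₀ 2 hη this

theorem sub_le_sq_orderStatDesc (hk : k < n) (hM : M < 1)
    (hrk : M / (2 * (1 - M)) < orderStatDesc r k) (he : ∀ i, 0 ≤ e i)
    (h : ∀ i, r i ^ 2 - (M * r i ^ 2 + M * r i + M) ≤ e i ^ 2) :
    orderStatDesc r k ^ 2 - (M * orderStatDesc r k ^ 2 + M * orderStatDesc r k + M) ≤
      orderStatDesc e k ^ 2 := by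
  set ρ := orderStatDesc r k
  set η := orderStatDesc e k
  have hMρ : M < 2 * (1 - M) * ρ := by
    have := (div_lt_iff₀ (by linarith : (0 : ℝ) < 2 * (1 - M))).mp hrk
    linarith
  by_contra! hlt
  refine lt_irrefl η (lt_orderStatDesc_of_forall (r := r) e hk fun i hi => ?_)
  -- `(1 - M) x ^ 2 - M x` increases beyond its vertex `M / (2 (1 - M)) < ρ`
  have hinc : 0 ≤ (r i - ρ) * ((1 - M) * (r i + ρ) - M) :=
    mul_nonneg (sub_nonneg.mpr hi) (by nlinarith)
  have : η ^ 2 < e i ^ 2 := by linarith [h i]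
  exact lt_of_pow_lt_pow_left₀ 2 (he i) this

theorem abs_sq_orderStatDesc_sub_sq_le (hk : k < n) (hM₀ : 0 ≤ M) (hM₁ : M < 1)
    (hrk : M / (2 * (1 - M)) < orderStatDesc r k) (hr : ∀ i, 0 ≤ r i) (he : ∀ i, 0 ≤ e i)
    (h : ∀ i, |e i ^ 2 - r i ^ 2| ≤ M * r i ^ 2 + M * r i + M) :
    |orderStatDesc e k ^ 2 - orderStatDesc r k ^ 2| ≤
      M * orderStatDesc r k ^ 2 + M * orderStatDesc r k + M := by
  have hup := sq_orderStatDesc_le e hk hM₀ hr he fun i => by linarith [(abs_le.mp (h i)).2]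
  have hlow := sub_le_sq_orderStatDesc e hk hM₁ hrk he fun i => by linarith [(abs_le.mp (h i)).1]
  exact abs_le.mpr ⟨by linarith, by linarith⟩

end OrderStat

section InnerProductSpace

variable {E : Type*} [NormedAddCommGroup E] [InnerProductSpace ℝ E]

theorem ContinuousLinearMap.abs_inner_apply_le (T : E →L[ℝ] E) (x y : E) :
    |⟪x, T y⟫| ≤ ‖T‖ * ‖x‖ * ‖y‖ :=
  calc |⟪x, T y⟫| ≤ ‖x‖ * ‖T y‖ := abs_real_inner_le_norm _ _
    _ ≤ ‖x‖ * (‖T‖ * ‖y‖) := by gcongr; exact T.le_opNorm y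
    _ = ‖T‖ * ‖x‖ * ‖y‖ := by ring

theorem abs_inner_sub_apply_sub_sub_le (P Q : E →L[ℝ] E) (a b x : E) :
    |⟪x - b, Q (x - b)⟫ - ⟪x - a, P (x - a)⟫| ≤
      ‖P - Q‖ * ‖x‖ ^ 2 + ((‖b‖ + ‖a‖) * ‖P - Q‖ + (‖Q‖ + ‖P‖) * ‖a - b‖) * ‖x‖
        + (‖a‖ ^ 2 * ‖P - Q‖ + (‖a‖ + ‖b‖) * ‖Q‖ * ‖a - b‖) := by
  set D := P - Q
  -- every term carries a factor `P - Q` or `a - b`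
  have expand : ⟪x - b, Q (x - b)⟫ - ⟪x - a, P (x - a)⟫ =
      -⟪x, D x⟫ + (⟪x, D a + Q (a - b)⟫ + ⟪a - b, P x⟫ + ⟪b, D x⟫)
        + (⟪b - a, Q b⟫ + ⟪a, Q (b - a)⟫ - ⟪a, D a⟫) := by
    simp only [D, map_sub, sub_apply, inner_sub_left, inner_sub_right, inner_add_right]
    ring
  have hDa : ‖D a + Q (a - b)‖ ≤ ‖D‖ * ‖a‖ + ‖Q‖ * ‖a - b‖ :=
    (norm_add_le _ _).trans (add_le_add (D.le_opNorm a) (Q.le_opNorm _))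
  have h₁ := D.abs_inner_apply_le x x
  have h₂ : |⟪x, D a + Q (a - b)⟫| ≤ ‖x‖ * (‖D‖ * ‖a‖ + ‖Q‖ * ‖a - b‖) :=
    (abs_real_inner_le_norm _ _).trans (by gcongr)
  have h₃ := P.abs_inner_apply_le (a - b) x
  have h₄ := D.abs_inner_apply_le b x
  have h₅ := Q.abs_inner_apply_le (b - a) b
  have h₆ := Q.abs_inner_apply_le a (b - a)
  have h₇ := D.abs_inner_apply_le a a
  rw [norm_sub_rev] at h₅ h₆
  rw [expand, abs_le]
  constructor <;> linarith [abs_le.mp h₁, abs_le.mp h₂, abs_le.mp h₃, abs_le.mp h₄,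
    abs_le.mp h₅, abs_le.mp h₆, abs_le.mp h₇]

theorem LinearMap.IsSymmetric.mul_norm_sq_le_inner_self {ι : Type*} [Fintype ι]
    {P : E →ₗ[ℝ] E} (hP : P.IsSymmetric) (b : OrthonormalBasis ι ℝ E) {c : ι → ℝ}
    (hb : ∀ j, P (b j) = c j • b j) {m : ℝ} (hm : ∀ j, m ≤ c j) (u : E) :
    m * ‖u‖ ^ 2 ≤ ⟪u, P u⟫ :=
  calc m * ‖u‖ ^ 2 = ∑ j, m * ⟪b j, u⟫ ^ 2 := by rw [← b.sum_sq_inner_right, Finset.mul_sum]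
    _ ≤ ∑ j, c j * ⟪b j, u⟫ ^ 2 := by gcongr with j; exact hm j
    _ = ∑ j, ⟪u, b j⟫ * ⟪b j, P u⟫ := by
      congr 1 with j
      rw [← hP, hb, real_inner_smul_left, real_inner_comm]
      ring
    _ = ⟪u, P u⟫ := b.sum_inner_mul_inner u (P u)

end InnerProductSpace

namespace Matrix

variable {ι : Type*} [Fintype ι] [DecidableEq ι] {S : Matrix ι ι ℝ}

theorem PosDef.inv_mulVec_eigenvectorBasis (hS : S.PosDef) (j : ι) :
    S⁻¹ *ᵥ ⇑(hS.isHermitian.eigenvectorBasis j) =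
      (hS.isHermitian.eigenvalues j)⁻¹ • ⇑(hS.isHermitian.eigenvectorBasis j) := by
  set v := ⇑(hS.isHermitian.eigenvectorBasis j)
  set c := hS.isHermitian.eigenvalues j
  have hc : c ≠ 0 := (hS.eigenvalues_pos j).ne'
  calc S⁻¹ *ᵥ v = c⁻¹ • S⁻¹ *ᵥ (c • v) := by
        rw [mulVec_smul, smul_smul, inv_mul_cancel₀ hc, one_smul]
    _ = c⁻¹ • S⁻¹ *ᵥ (S *ᵥ v) := by rw [hS.isHermitian.mulVec_eigenvectorBasis j]
    _ = c⁻¹ • v := by rw [mulVec_mulVec, nonsing_inv_mul S hS.det_pos.ne'.isUnit, one_mulVec]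

theorem PosDef.norm_sq_le_mul_inner_inv (hS : S.PosDef) {lam : ℝ} (hlam₀ : 0 < lam)
    (hlam : ∀ j, hS.isHermitian.eigenvalues j ≤ lam) (u : EuclideanSpace ℝ ι) :
    ‖u‖ ^ 2 ≤ lam * ⟪u, toEuclideanCLM (𝕜 := ℝ) S⁻¹ u⟫ := by
  have hsymm : (toEuclideanLin S⁻¹).IsSymmetric :=
    isSymmetric_toEuclideanLin_iff.mpr hS.inv.isHermitian
  have heig : ∀ j, toEuclideanLin S⁻¹ (hS.isHermitian.eigenvectorBasis j) =
      (hS.isHermitian.eigenvalues j)⁻¹ • hS.isHermitian.eigenvectorBasis j := fun j => by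
    apply WithLp.ofLp_injective
    simpa using hS.inv_mulVec_eigenvectorBasis j
  have h := hsymm.mul_norm_sq_le_inner_self hS.isHermitian.eigenvectorBasis heig
    (fun j => inv_anti₀ (hS.eigenvalues_pos j) (hlam j)) u
  rwa [inv_mul_eq_div, div_le_iff₀ hlam₀, mul_comm] at h

end Matrix

section Mahalanobis

variable {d : ℕ} {S Shat : Matrix (Fin d) (Fin d) ℝ}

theorem mahalanobis_nonneg (A : Matrix (Fin d) (Fin d) ℝ) (x y : EuclideanSpace ℝ (Fin d)) :
    0 ≤ mahalanobis A x y :=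
  Real.sqrt_nonneg _

theorem Matrix.PosDef.sq_mahalanobis (hS : S.PosDef) (x y : EuclideanSpace ℝ (Fin d)) :
    mahalanobis S x y ^ 2 = ⟪x - y, Matrix.toEuclideanCLM (𝕜 := ℝ) S⁻¹ (x - y)⟫ := by
  refine Real.sq_sqrt ?_
  change 0 ≤ ⟪x - y, Matrix.toEuclideanCLM (𝕜 := ℝ) S⁻¹ (x - y)⟫
  rw [Matrix.inner_toEuclideanCLM]
  simpa using hS.inv.posSemidef.dotProduct_mulVec_nonneg (x - y).ofLp

theorem Matrix.PosDef.norm_sub_le_sqrt_mul_mahalanobis (hS : S.PosDef) {lam : ℝ}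
    (hlam₀ : 0 < lam) (hlam : ∀ j, hS.isHermitian.eigenvalues j ≤ lam)
    (x y : EuclideanSpace ℝ (Fin d)) :
    ‖x - y‖ ≤ √lam * mahalanobis S x y := by
  refine (pow_le_pow_iff_left₀ (norm_nonneg _)
    (mul_nonneg (Real.sqrt_nonneg _) (mahalanobis_nonneg _ _ _)) two_ne_zero).mp ?_
  rw [mul_pow, Real.sq_sqrt hlam₀.le, hS.sq_mahalanobis]
  exact hS.norm_sq_le_mul_inner_inv hlam₀ hlam (x - y)

theorem abs_sq_mahalanobis_sub_sq_mahalanobis_le (hS : S.PosDef) (hShat : Shat.PosDef)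
    (x μ μhat : EuclideanSpace ℝ (Fin d)) :
    |mahalanobis Shat x μhat ^ 2 - mahalanobis S x μ ^ 2| ≤
      matOpNorm (S⁻¹ - Shat⁻¹) * ‖x‖ ^ 2
        + ((‖μhat‖ + ‖μ‖) * matOpNorm (S⁻¹ - Shat⁻¹)
          + (matOpNorm Shat⁻¹ + matOpNorm S⁻¹) * ‖μ - μhat‖) * ‖x‖
        + (‖μ‖ ^ 2 * matOpNorm (S⁻¹ - Shat⁻¹)
          + (‖μ‖ + ‖μhat‖) * matOpNorm Shat⁻¹ * ‖μ - μhat‖) := by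
  rw [hShat.sq_mahalanobis, hS.sq_mahalanobis]
  have h := abs_inner_sub_apply_sub_sub_le (Matrix.toEuclideanCLM (𝕜 := ℝ) S⁻¹)
    (Matrix.toEuclideanCLM (𝕜 := ℝ) Shat⁻¹) μ μhat x
  rwa [← map_sub] at h

end Mahalanobis

/-- Lemma (bound on ε): if `M < 1` and `R_{(l,n)} > M/(2(1−M))` then
`|E_{(l,n)}² − R_{(l,n)}²| ≤ δ(R_{(l,n)})` with `δ(x) = Mx² + Mx + M`. -/
theorem abs_eps_le_delta {d n : ℕ}
    (X : Fin n → EuclideanSpace ℝ (Fin d))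
    (μ μhat : EuclideanSpace ℝ (Fin d)) (S Shat : Matrix (Fin d) (Fin d) ℝ)
    (hSpd : S.PosDef) (hShatpd : Shat.PosDef)
    (lammax : ℝ) (hmax : IsGreatest (Set.range hSpd.isHermitian.eigenvalues) lammax)
    (A B C M : ℝ)
    (hA : A = matOpNorm (S⁻¹ - Shat⁻¹))
    (hB : B = (‖μhat‖ + ‖μ‖) * matOpNorm (S⁻¹ - Shat⁻¹)
      + (matOpNorm Shat⁻¹ + matOpNorm S⁻¹) * ‖μ - μhat‖)
    (hC : C = ‖μ‖ ^ 2 * matOpNorm (S⁻¹ - Shat⁻¹)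
      + (‖μ‖ + ‖μhat‖) * matOpNorm Shat⁻¹ * ‖μ - μhat‖)
    (hM : M = max (max (lammax * A) (Real.sqrt lammax * (2 * ‖μ‖ * A + B)))
      (A * ‖μ‖ ^ 2 + B * ‖μ‖ + C))
    (R E : Fin n → ℝ)
    (hR : ∀ i, R i = mahalanobis S (X i) μ)
    (hE : ∀ i, E i = mahalanobis Shat (X i) μhat)
    (l : ℕ) (hl1 : 1 ≤ l) (hln : l ≤ n)
    (hM1 : M < 1)
    (hRl : M / (2 * (1 - M)) < orderStatDesc R (l - 1)) :
    |(orderStatDesc E (l - 1)) ^ 2 - (orderStatDesc R (l - 1)) ^ 2| ≤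
      M * (orderStatDesc R (l - 1)) ^ 2 + M * orderStatDesc R (l - 1) + M := by
  have hk : l - 1 < n := by omega
  obtain ⟨j, hj⟩ := hmax.1
  have hlam₀ : 0 < lammax := hj ▸ hSpd.eigenvalues_pos j
  have hlam : ∀ j, hSpd.isHermitian.eigenvalues j ≤ lammax := fun j => hmax.2 ⟨j, rfl⟩
  have hA₀ : 0 ≤ A := hA ▸ norm_nonneg _
  have hB₀ : 0 ≤ B := hB ▸ by unfold matOpNorm; positivity
  have hR₀ : ∀ i, 0 ≤ R i := fun i => hR i ▸ mahalanobis_nonneg _ _ _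
  have hE₀ : ∀ i, 0 ≤ E i := fun i => hE i ▸ mahalanobis_nonneg _ _ _
  have hMquad : √lammax ^ 2 * A ≤ M := by
    rw [Real.sq_sqrt hlam₀.le, hM]; exact le_max_of_le_left (le_max_left _ _)
  have hMlin : √lammax * (2 * ‖μ‖ * A + B) ≤ M := hM ▸ le_max_of_le_left (le_max_right _ _)
  have hMconst : A * ‖μ‖ ^ 2 + B * ‖μ‖ + C ≤ M := hM ▸ le_max_right _ _
  refine abs_sq_orderStatDesc_sub_sq_le E hk (le_trans (by positivity) hMquad) hM1 hRl hR₀ hE₀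
    fun i => ?_
  have hX : ‖X i‖ ≤ ‖μ‖ + √lammax * R i := by
    have := hR i ▸ hSpd.norm_sub_le_sqrt_mul_mahalanobis hlam₀ hlam (X i) μ
    linarith [norm_le_norm_add_norm_sub' (X i) μ]
  have hquad := abs_sq_mahalanobis_sub_sq_mahalanobis_le hSpd hShatpd (X i) μ μhat
  rw [← hB, ← hC, ← hA, ← hR, ← hE] at hquad
  have hsq : ‖X i‖ ^ 2 ≤ (‖μ‖ + √lammax * R i) ^ 2 := pow_le_pow_left₀ (norm_nonneg _) hX 2
  linarith [mul_le_mul_of_nonneg_left hsq hA₀, mul_le_mul_of_nonneg_left hX hB₀,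
    mul_le_mul_of_nonneg_right hMquad (sq_nonneg (R i)), mul_le_mul_of_nonneg_right hMlin (hR₀ i)]
end
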